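/- arXiv:2311.07086 — 7 statements merged into one kernel-verified Lean document; each statement's English description precedes it below -/
import Mathlib

section
/- Let A be an n×n complex matrix all of whose eigenvalues have strictly positive real part, and let B be an m×m complex matrix all of whose eigenvalues have strictly negative real part. Then for every n×m complex matrix Y, the function t ↦ exp(-tA) · Y · exp(tB) is Bochner integrable on [0,∞), and the matrix X = ∫₀^∞ exp(-tA) · Y · exp(tB) dt satisfies the Sylvester equation A·X − X·B = Y. -/
open MeasureTheory Matrix NormedSpace

attribute [local instance] Matrix.frobeniusNormedAddCommGroup Matrix.frobeniusNormedSpace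

namespace SylvesterAux

open Polynomial Filter Topology

theorem spectrum_exp_subset {N : ℕ} (hN : 0 < N) (M : Matrix (Fin N) (Fin N) ℂ) :
    ∀ lam ∈ spectrum ℂ (exp M), ∃ μ ∈ spectrum ℂ M, lam = Complex.exp μ := by
  letI := Matrix.frobeniusNormedRing (m := Fin N) (α := ℂ)
  letI := Matrix.frobeniusNormedAlgebra (m := Fin N) (R := ℂ) (α := ℂ)
  haveI : Nonempty (Fin N) := ⟨⟨0, hN⟩⟩
  have hint : IsIntegral ℂ M := Algebra.IsIntegral.isIntegral M
  set p := minpoly ℂ M with hp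
  have hmonic : p.Monic := minpoly.monic hint
  set d := p.natDegree with hd
  have hd0 : 0 < d := minpoly.natDegree_pos hint
  set S : ℕ → ℂ[X] := fun K => ∑ k ∈ Finset.range K, Polynomial.C ((k.factorial : ℂ)⁻¹) * X ^ k
    with hS
  set T : ℕ → (Fin d → ℂ) := fun K i => (S K %ₘ p).coeff i with hT
  set Φl : (Fin d → ℂ) →ₗ[ℂ] Matrix (Fin N) (Fin N) ℂ :=
    { toFun := fun c => ∑ i : Fin d, c i • M ^ (i : ℕ)
      map_add' := fun c c' => by simp [add_smul, Finset.sum_add_distrib]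
      map_smul' := fun a c => by simp [smul_smul, Finset.smul_sum] } with hΦl
  have hΦaeval : ∀ c : Fin d → ℂ,
      Polynomial.aeval M (∑ i : Fin d, Polynomial.C (c i) * X ^ (i : ℕ)) = Φl c := by
    intro c
    simp [hΦl, map_sum, Algebra.smul_def]
  have hΦinj : Function.Injective Φl := by
    refine LinearMap.ker_eq_bot.mp (LinearMap.ker_eq_bot'.mpr fun c hc => ?_)
    have hq : Polynomial.aeval M (∑ i : Fin d, Polynomial.C (c i) * X ^ (i : ℕ)) = 0 := by
      rw [hΦaeval c]; exact hc
    have hdeg : (∑ i : Fin d, Polynomial.C (c i) * X ^ (i : ℕ)).degree < p.degree := by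
      rw [Polynomial.degree_eq_natDegree hmonic.ne_zero]
      refine lt_of_le_of_lt (Polynomial.degree_sum_le _ _) ?_
      rw [Finset.sup_lt_iff (by exact_mod_cast WithBot.bot_lt_coe d)]
      intro i _
      exact lt_of_le_of_lt (Polynomial.degree_C_mul_X_pow_le _ _) (by exact_mod_cast i.2)
    have hq0 : (∑ i : Fin d, Polynomial.C (c i) * X ^ (i : ℕ)) = 0 := by
      by_contra hne
      exact absurd (minpoly.degree_le_of_ne_zero ℂ M hne hq) (not_le.mpr hdeg)
    funext i
    have h2 := congrArg (fun q => Polynomial.coeff q (i : ℕ)) hq0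
    simpa [Polynomial.finset_sum_coeff, Polynomial.coeff_C_mul, Polynomial.coeff_X_pow,
      Fin.val_inj, Finset.sum_ite_eq'] using h2
  have hlt : ∀ K, (S K %ₘ p).natDegree < d := by
    intro K
    rcases eq_or_ne (S K %ₘ p) 0 with h | h
    · simpa [h] using hd0
    · exact Polynomial.natDegree_lt_natDegree h (Polynomial.degree_modByMonic_lt _ hmonic)
  have hSval : ∀ K, Polynomial.aeval M (S K) = ∑ k ∈ Finset.range K,
      ((k.factorial : ℂ)⁻¹) • M ^ k := by
    intro K
    simp [hS, map_sum, Algebra.smul_def]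
  have hmodval : ∀ K, Φl (T K) = Polynomial.aeval M (S K) := by
    intro K
    have h1 : Polynomial.aeval M (S K %ₘ p) =
        ∑ i ∈ Finset.range d, (S K %ₘ p).coeff i • M ^ i :=
      Polynomial.aeval_eq_sum_range' (hlt K) M
    have h2 : Polynomial.aeval M (S K) = Polynomial.aeval M (S K %ₘ p) := by
      conv_lhs => rw [← Polynomial.modByMonic_add_div (S K) p]
      simp [hp, minpoly.aeval ℂ M]
    rw [h2, h1, Finset.sum_range]
    rfl
  haveI : CompleteSpace (Matrix (Fin N) (Fin N) ℂ) := FiniteDimensional.complete ℂ _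
  have htends : Tendsto (fun K => Φl (T K)) atTop (𝓝 (exp M)) := by
    have h1 : Tendsto (fun K => ∑ k ∈ Finset.range K, ((k.factorial : ℂ)⁻¹) • M ^ k) atTop
        (𝓝 (exp M)) := by
      have h0 := (expSeries_summable' (𝕂 := ℂ) M).hasSum.tendsto_sum_nat
      have h2 : exp M = ∑' (n : ℕ), ((n.factorial : ℂ)⁻¹) • M ^ n := by
        rw [exp_eq_tsum ℂ]
      rw [h2]
      exact h0
    simpa only [hmodval, hSval] using h1
  have mem : exp M ∈ LinearMap.range Φl := by
    have hclosed := (LinearMap.range Φl).closed_of_finiteDimensional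
    exact hclosed.mem_of_tendsto htends (Eventually.of_forall fun K =>
      LinearMap.mem_range_self _ _)
  set e := LinearEquiv.ofInjective Φl hΦinj with he
  have hsymm : ∀ (c : Fin d → ℂ) (h : Φl c ∈ LinearMap.range Φl), e.symm ⟨Φl c, h⟩ = c := by
    intro c h
    have : (⟨Φl c, h⟩ : LinearMap.range Φl) = e c :=
      Subtype.ext (by rw [LinearEquiv.ofInjective_apply])
    rw [this, LinearEquiv.symm_apply_apply]
  have hcont : Continuous ⇑(e.symm) := e.symm.toLinearMap.continuous_of_finiteDimensional
  set cinf : Fin d → ℂ := e.symm ⟨exp M, mem⟩ with hcinf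
  have hTc : Tendsto T atTop (𝓝 cinf) := by
    have hsub : Tendsto (fun K => (⟨Φl (T K), LinearMap.mem_range_self _ _⟩ :
        LinearMap.range Φl)) atTop (𝓝 ⟨exp M, mem⟩) := by
      rw [tendsto_subtype_rng]
      exact htends
    have h2 := (hcont.tendsto _).comp hsub
    simpa only [Function.comp_def, hsymm] using h2
  have haevalc : Polynomial.aeval M (∑ i : Fin d, Polynomial.C (cinf i) * X ^ (i : ℕ)) =
      exp M := by
    rw [hΦaeval]
    have : Φl cinf = ((e cinf : LinearMap.range Φl) : Matrix (Fin N) (Fin N) ℂ) := by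
      rw [LinearEquiv.ofInjective_apply]
    rw [this, hcinf, LinearEquiv.apply_symm_apply]
  have hnonemp : (spectrum ℂ M).Nonempty :=
    spectrum.nonempty_of_isAlgClosed_of_finiteDimensional ℂ M
  intro lam hlam
  rw [← haevalc, spectrum.map_polynomial_aeval_of_nonempty M _ hnonemp] at hlam
  obtain ⟨μ, hμ, hevq⟩ := hlam
  refine ⟨μ, hμ, ?_⟩
  -- now evaluate: eval μ q∞ = Complex.exp μ
  have hpμ : Polynomial.eval μ p = 0 := by
    have h1 : (fun k => Polynomial.eval k p) '' spectrum ℂ M ⊆ spectrum ℂ (Polynomial.aeval M p) :=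
      spectrum.subset_polynomial_aeval M p
    have h2 := h1 ⟨μ, hμ, rfl⟩
    rw [minpoly.aeval ℂ M, spectrum.zero_eq] at h2
    simpa using h2
  set ev : (Fin d → ℂ) → ℂ := fun c => ∑ i : Fin d, c i * μ ^ (i : ℕ) with hev
  have hevcont : Continuous ev :=
    continuous_finset_sum _ fun i _ => (continuous_apply i).mul continuous_const
  have hevT : ∀ K, ev (T K) = Polynomial.eval μ (S K) := by
    intro K
    have h1 : Polynomial.eval μ (S K %ₘ p) =
        ∑ i ∈ Finset.range d, (S K %ₘ p).coeff i * μ ^ i :=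
      Polynomial.eval_eq_sum_range' (hlt K) μ
    have h2 : Polynomial.eval μ (S K) = Polynomial.eval μ (S K %ₘ p) := by
      conv_lhs => rw [← Polynomial.modByMonic_add_div (S K) p]
      simp [hpμ]
    rw [h2, h1, Finset.sum_range]
  have hevS : Tendsto (fun K => Polynomial.eval μ (S K)) atTop (𝓝 (Complex.exp μ)) := by
    have h1 : ∀ K, Polynomial.eval μ (S K) = ∑ k ∈ Finset.range K,
        ((k.factorial : ℂ)⁻¹) • μ ^ k := by
      intro K
      simp [hS, Polynomial.eval_finset_sum, smul_eq_mul]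
    have h2 := (expSeries_summable' (𝕂 := ℂ) μ).hasSum.tendsto_sum_nat
    have h3 : Complex.exp μ = ∑' (n : ℕ), ((n.factorial : ℂ)⁻¹) • μ ^ n := by
      rw [Complex.exp_eq_exp_ℂ, exp_eq_tsum ℂ]
    rw [h3]
    simpa only [← h1] using h2
  have hfinal : ev cinf = Complex.exp μ := by
    refine tendsto_nhds_unique ((hevcont.tendsto _).comp hTc) ?_
    simpa only [Function.comp_def, hevT] using hevS
  rw [← hevq, ← hfinal]
  simp [hev, Polynomial.eval_finset_sum]

theorem norm_exp_smul_le {N : ℕ} (M : Matrix (Fin N) (Fin N) ℂ)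
    (h : ∀ μ ∈ spectrum ℂ M, μ.re < 0) :
    ∃ C > (0:ℝ), ∃ ε > (0:ℝ), ∀ t : ℝ, 0 ≤ t →
      ‖exp (t • M)‖ ≤ C * Real.exp (-(ε * t)) := by
  letI := Matrix.frobeniusNormedRing (m := Fin N) (α := ℂ)
  letI := Matrix.frobeniusNormedAlgebra (m := Fin N) (R := ℂ) (α := ℂ)
  haveI : CompleteSpace (Matrix (Fin N) (Fin N) ℂ) := FiniteDimensional.complete ℂ _
  rcases Nat.eq_zero_or_pos N with hN | hN
  · refine ⟨1, one_pos, 1, one_pos, fun t ht => ?_⟩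
    haveI : IsEmpty (Fin N) := by subst hN; infer_instance
    haveI : Subsingleton (Matrix (Fin N) (Fin N) ℂ) :=
      ⟨fun a b => Matrix.ext fun i _ => isEmptyElim i⟩
    rw [Subsingleton.elim (exp (t • M)) 0, norm_zero]
    positivity
  haveI : Nonempty (Fin N) := ⟨⟨0, hN⟩⟩
  -- maximal real part of the spectrum
  have hcpt : IsCompact (spectrum ℂ M) := spectrum.isCompact M
  have hne : (spectrum ℂ M).Nonempty :=
    spectrum.nonempty_of_isAlgClosed_of_finiteDimensional ℂ M
  obtain ⟨μ₀, hμ₀, hmax⟩ := hcpt.exists_isMaxOn hne Complex.continuous_re.continuousOn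
  have hs0 : μ₀.re < 0 := h μ₀ hμ₀
  set r : NNReal := Real.toNNReal (Real.exp (μ₀.re / 2)) with hr
  have hrc : (r : ℝ) = Real.exp (μ₀.re / 2) := Real.coe_toNNReal _ (Real.exp_pos _).le
  have hr0 : (0:ℝ) < r := by rw [hrc]; exact Real.exp_pos _
  have hr1 : (r : ℝ) < 1 := by
    rw [hrc, Real.exp_lt_one_iff]
    linarith
  -- spectral radius of exp M is < r
  have hexpne : (spectrum ℂ (exp M)).Nonempty :=
    spectrum.nonempty_of_isAlgClosed_of_finiteDimensional ℂ _
  have hρ : spectralRadius ℂ (exp M) < (r : NNReal) := by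
    refine spectrum.spectralRadius_lt_of_forall_lt_of_nonempty hexpne fun k hk => ?_
    obtain ⟨μ, hμ, rfl⟩ := spectrum_exp_subset hN M k hk
    have h1 : ‖Complex.exp μ‖ < (r:ℝ) := by
      rw [Complex.norm_exp, hrc]
      have h2 : μ.re ≤ μ₀.re := hmax hμ
      exact Real.exp_lt_exp.mpr (by linarith)
    exact_mod_cast h1
  -- Gelfand's formula gives eventual geometric bound on powers
  have htend := spectrum.pow_nnnorm_pow_one_div_tendsto_nhds_spectralRadius (exp M)
  have hev : ∀ᶠ k : ℕ in atTop,
      (‖(exp M) ^ k‖₊ : ENNReal) ^ (1 / (k:ℝ)) < (r : ENNReal) :=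
    htend.eventually_lt_const (by exact_mod_cast hρ)
  obtain ⟨K, hK⟩ := Filter.eventually_atTop.mp hev
  have hpow : ∀ k : ℕ, K ≤ k → 0 < k → ‖(exp M) ^ k‖ ≤ (r:ℝ) ^ k := by
    intro k hk1 hk2
    have h1 := (hK k hk1).le
    have h2 : ((‖(exp M) ^ k‖₊ : ENNReal) ^ (1 / (k:ℝ))) ^ (k:ℝ) ≤ (r : ENNReal) ^ (k:ℝ) :=
      ENNReal.rpow_le_rpow h1 (Nat.cast_nonneg k)
    rw [← ENNReal.rpow_mul, one_div_mul_cancel (Nat.cast_ne_zero.mpr hk2.ne'),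
      ENNReal.rpow_one, ENNReal.rpow_natCast, ← ENNReal.coe_pow, ENNReal.coe_le_coe] at h2
    exact_mod_cast h2
  -- bound on a compact interval
  set T0 : ℝ := (K:ℝ) + 1 with hT0
  have hT01 : (1:ℝ) ≤ T0 := by
    have : (0:ℝ) ≤ (K:ℝ) := Nat.cast_nonneg K
    linarith
  obtain ⟨C3, hC3⟩ := (isCompact_Icc (a := (0:ℝ)) (b := T0)).exists_bound_of_continuousOn
    (f := fun t : ℝ => exp (t • M))
    ((continuous_iff_continuousAt.mpr fun t => (hasDerivAt_exp_smul_const (𝕂 := ℝ) M t).continuousAt).continuousOn)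
  set C4 : ℝ := max C3 1 with hC4
  have hC40 : (0:ℝ) < C4 := lt_of_lt_of_le one_pos (le_max_right _ _)
  have hC4b : ∀ u ∈ Set.Icc (0:ℝ) T0, ‖exp (u • M)‖ ≤ C4 :=
    fun u hu => le_trans (hC3 u hu) (le_max_left _ _)
  set ε : ℝ := -Real.log r with hε
  have hε0 : 0 < ε := by
    have := Real.log_neg hr0 hr1
    simp only [hε]
    linarith
  set C : ℝ := C4 * Real.exp (ε * T0) + C4 / r with hC
  have hC0 : 0 < C := by positivity
  refine ⟨C, hC0, ε, hε0, fun t ht => ?_⟩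
  rcases le_or_gt t T0 with hcase | hcase
  · -- small t
    have h1 : ‖exp (t • M)‖ ≤ C4 := hC4b t ⟨ht, hcase⟩
    have h2 : Real.exp (-(ε * T0)) ≤ Real.exp (-(ε * t)) := by
      apply Real.exp_le_exp.mpr
      nlinarith
    have h3 : C4 = (C4 * Real.exp (ε * T0)) * Real.exp (-(ε * T0)) := by
      rw [mul_assoc, ← Real.exp_add]
      simp
    calc ‖exp (t • M)‖ ≤ C4 := h1
      _ = (C4 * Real.exp (ε * T0)) * Real.exp (-(ε * T0)) := h3
      _ ≤ (C4 * Real.exp (ε * T0)) * Real.exp (-(ε * t)) := by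
          apply mul_le_mul_of_nonneg_left h2 (by positivity)
      _ ≤ C * Real.exp (-(ε * t)) := by
          apply mul_le_mul_of_nonneg_right _ (Real.exp_pos _).le
          rw [hC]
          have : 0 ≤ C4 / r := by positivity
          linarith
  · -- large t
    set k : ℕ := ⌊t⌋₊ with hk
    have hkK : K ≤ k := Nat.le_floor (by simp only [hT0] at hcase; linarith)
    have hk0 : 0 < k := Nat.le_floor (by exact_mod_cast (by linarith : (1:ℝ) ≤ t))
    set u : ℝ := t - (k:ℝ) with hu
    have hu0 : 0 ≤ u := sub_nonneg.mpr (Nat.floor_le ht)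
    have hu1 : u ≤ 1 := by
      have := Nat.lt_floor_add_one t
      simp only [hu]
      linarith
    have hsplit : exp (t • M) = exp ((k:ℝ) • M) * exp (u • M) := by
      have hco : Commute ((k:ℝ) • M) (u • M) := ((Commute.refl M).smul_left _).smul_right _
      have h1 : exp ((k:ℝ) • M + u • M) = exp ((k:ℝ) • M) * exp (u • M) :=
        Matrix.exp_add_of_commute _ _ hco
      rw [← h1, ← add_smul]
      congr 1
      simp [hu]
    have hnpow : exp ((k:ℝ) • M) = exp M ^ k := by
      have h1 : exp ((k : ℕ) • M) = exp M ^ k := Matrix.exp_nsmul _ _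
      rw [← h1, Nat.cast_smul_eq_nsmul]
    have h1 : ‖exp (t • M)‖ ≤ (r:ℝ) ^ k * C4 := by
      rw [hsplit]
      refine le_trans (norm_mul_le _ _) ?_
      have h2 := hpow k hkK hk0
      rw [hnpow]
      exact mul_le_mul h2 (hC4b u ⟨hu0, le_trans hu1 hT01⟩) (norm_nonneg _) (pow_nonneg hr0.le _)
    -- (r:ℝ)^k ≤ exp(-(ε*t)) / r
    have h2 : (r:ℝ) ^ k ≤ Real.exp (-(ε * t)) / r := by
      have hklb : t - 1 ≤ (k:ℝ) := by
        have := Nat.lt_floor_add_one t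
        simp only [hk]
        linarith [Nat.lt_floor_add_one t]
      have h3 : (r:ℝ) ^ k = Real.exp ((k:ℝ) * Real.log r) := by
        rw [← Real.log_pow, Real.exp_log (by positivity)]
      have h4 : (k:ℝ) * Real.log r ≤ (t - 1) * Real.log r := by
        apply mul_le_mul_of_nonpos_right hklb
        exact (Real.log_neg hr0 hr1).le
      have h5 : (t - 1) * Real.log r = -(ε * t) - Real.log r := by
        simp only [hε]
        ring
      have h6 : Real.exp (-(ε * t)) / (r:ℝ) = Real.exp (-(ε * t) - Real.log r) := by
        rw [Real.exp_sub, Real.exp_log hr0]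
      rw [h3, h6]
      exact Real.exp_le_exp.mpr (by linarith)
    calc ‖exp (t • M)‖ ≤ (r:ℝ) ^ k * C4 := h1
      _ ≤ (Real.exp (-(ε * t)) / r) * C4 := by
          apply mul_le_mul_of_nonneg_right h2 hC40.le
      _ = (C4 / r) * Real.exp (-(ε * t)) := by ring
      _ ≤ C * Real.exp (-(ε * t)) := by
          apply mul_le_mul_of_nonneg_right _ (Real.exp_pos _).le
          rw [hC]
          nlinarith [Real.exp_pos (ε * T0)]

end SylvesterAux

open Filter Topology SylvesterAux

/-- If all eigenvalues of `A` have strictly positive real part and all eigenvalues of `B` have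
strictly negative real part, then `t ↦ exp(-tA) ⬝ Y ⬝ exp(tB)` is Bochner integrable on `[0, ∞)`
and `X = ∫₀^∞ exp(-tA) Y exp(tB) dt` solves the Sylvester equation `A X - X B = Y`. -/
theorem sylvester_solution_integral (n m : ℕ)
    (A : Matrix (Fin n) (Fin n) ℂ) (B : Matrix (Fin m) (Fin m) ℂ)
    (hA : ∀ μ ∈ spectrum ℂ A, 0 < μ.re)
    (hB : ∀ μ ∈ spectrum ℂ B, μ.re < 0)
    (Y : Matrix (Fin n) (Fin m) ℂ) :
    @IntegrableOn ℝ (Matrix (Fin n) (Fin m) ℂ) _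
      (Matrix.frobeniusNormedAddCommGroup (α := ℂ)).toUniformSpace.toTopologicalSpace _
      (fun t : ℝ => exp (-(t • A)) * Y * exp (t • B)) (Set.Ici 0) volume ∧
      A * (∫ t in Set.Ici (0:ℝ), exp (-(t • A)) * Y * exp (t • B)) -
        (∫ t in Set.Ici (0:ℝ), exp (-(t • A)) * Y * exp (t • B)) * B = Y := by
  classical
  -- degenerate cases: `Matrix (Fin n) (Fin m) ℂ` is a subsingleton
  by_cases hdeg : n = 0 ∨ m = 0
  · haveI : Subsingleton (Matrix (Fin n) (Fin m) ℂ) := by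
      rcases hdeg with h0 | h0 <;> subst h0
      · exact ⟨fun a b => Matrix.ext fun i _ => isEmptyElim i⟩
      · exact ⟨fun a b => Matrix.ext fun _ j => isEmptyElim j⟩
    constructor
    · have hzero : (fun t : ℝ => exp (-(t • A)) * Y * exp (t • B)) =
          fun _ => (0 : Matrix (Fin n) (Fin m) ℂ) := funext fun t => Subsingleton.elim _ _
      rw [hzero]
      exact integrableOn_zero
    · exact Subsingleton.elim _ _
  push_neg at hdeg
  obtain ⟨hn, hm⟩ := hdeg
  letI := Matrix.frobeniusNormedRing (m := Fin n) (α := ℂ)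
  letI := Matrix.frobeniusNormedAlgebra (m := Fin n) (R := ℂ) (α := ℂ)
  letI := Matrix.frobeniusNormedRing (m := Fin m) (α := ℂ)
  letI := Matrix.frobeniusNormedAlgebra (m := Fin m) (R := ℂ) (α := ℂ)
  letI := Matrix.frobeniusNormedAddCommGroup (m := Fin n) (n := Fin m) (α := ℂ)
  letI := Matrix.frobeniusNormedSpace (m := Fin n) (n := Fin m) (R := ℝ) (α := ℂ)
  letI : TopologicalSpace (Matrix (Fin n) (Fin m) ℂ) :=
    (Matrix.frobeniusNormedAddCommGroup (α := ℂ)).toUniformSpace.toTopologicalSpace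
  haveI : CompleteSpace (Matrix (Fin n) (Fin n) ℂ) := FiniteDimensional.complete ℂ _
  haveI : CompleteSpace (Matrix (Fin m) (Fin m) ℂ) := FiniteDimensional.complete ℂ _
  haveI : CompleteSpace (Matrix (Fin n) (Fin m) ℂ) := FiniteDimensional.complete ℂ _
  set F : ℝ → Matrix (Fin n) (Fin m) ℂ :=
    fun t => exp (-(t • A)) * Y * exp (t • B) with hF
  have hFeq : F = fun t => exp (t • (-A)) * Y * exp (t • B) := by
    funext t
    rw [hF, smul_neg]
  -- spectral hypothesis for -A
  have hA' : ∀ μ ∈ spectrum ℂ (-A), μ.re < 0 := by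
    intro μ hμ
    rw [← spectrum.neg_eq, Set.mem_neg] at hμ
    have := hA _ hμ
    rw [Complex.neg_re] at this
    linarith
  obtain ⟨Ca, hCa, εa, hεa, hba⟩ := norm_exp_smul_le (-A) hA'
  obtain ⟨Cb, hCb, εb, hεb, hbb⟩ := norm_exp_smul_le B hB
  set ε : ℝ := min εa εb with hε
  have hε0 : 0 < ε := lt_min hεa hεb
  set CY : ℝ := Ca * (‖Y‖ + 1) * Cb with hCY
  have hCY0 : 0 < CY := by positivity
  -- the exponential bound for F
  have hFb : ∀ t : ℝ, 0 ≤ t → ‖F t‖ ≤ CY * Real.exp (-(ε * t)) := by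
    intro t ht
    have h1 : ‖F t‖ ≤ ‖exp (t • (-A))‖ * ‖Y‖ * ‖exp (t • B)‖ := by
      rw [hFeq]
      refine le_trans (Matrix.frobenius_norm_mul _ _) ?_
      exact mul_le_mul_of_nonneg_right (Matrix.frobenius_norm_mul _ _) (norm_nonneg _)
    have h2 : ‖exp (t • (-A))‖ ≤ Ca * Real.exp (-(εa * t)) := hba t ht
    have h3 : ‖exp (t • B)‖ ≤ Cb * Real.exp (-(εb * t)) := hbb t ht
    have h4 : ‖F t‖ ≤ (Ca * Real.exp (-(εa * t))) * ‖Y‖ * (Cb * Real.exp (-(εb * t))) := by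
      refine le_trans h1 ?_
      have e1 : (0:ℝ) ≤ ‖exp (t • (-A))‖ * ‖Y‖ := by positivity
      have e2 : ‖exp (t • (-A))‖ * ‖Y‖ ≤ (Ca * Real.exp (-(εa * t))) * ‖Y‖ :=
        mul_le_mul_of_nonneg_right h2 (norm_nonneg _)
      exact mul_le_mul e2 h3 (norm_nonneg _) (by positivity)
    refine le_trans h4 ?_
    have h5 : Real.exp (-(εa * t)) * Real.exp (-(εb * t)) ≤ Real.exp (-(ε * t)) := by
      rw [← Real.exp_add]
      apply Real.exp_le_exp.mpr
      have h6 : ε * t ≤ εa * t := mul_le_mul_of_nonneg_right (min_le_left _ _) ht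
      have h7 : 0 ≤ εb * t := by positivity
      linarith
    calc (Ca * Real.exp (-(εa * t))) * ‖Y‖ * (Cb * Real.exp (-(εb * t)))
        = (Ca * ‖Y‖ * Cb) * (Real.exp (-(εa * t)) * Real.exp (-(εb * t))) := by ring
      _ ≤ (Ca * ‖Y‖ * Cb) * Real.exp (-(ε * t)) := by
          apply mul_le_mul_of_nonneg_left h5 (by positivity)
      _ ≤ CY * Real.exp (-(ε * t)) := by
          apply mul_le_mul_of_nonneg_right _ (Real.exp_pos _).le
          rw [hCY]
          have : ‖Y‖ ≤ ‖Y‖ + 1 := by linarith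
          nlinarith [norm_nonneg Y]
  -- derivatives
  have hexpAeq : (exp : Matrix (Fin n) (Fin n) ℂ → _) = exp := rfl
  have hexpBeq : (exp : Matrix (Fin m) (Fin m) ℂ → _) = exp := rfl
  have hE1 : ∀ t : ℝ, HasDerivAt (fun t : ℝ => exp (t • (-A)))
      ((-A) * exp (t • (-A))) t := by
    intro t
    rw [hexpAeq]
    exact hasDerivAt_exp_smul_const' (-A) t
  have hE2 : ∀ t : ℝ, HasDerivAt (fun t : ℝ => exp (t • B))
      (exp (t • B) * B) t := by
    intro t
    rw [hexpBeq]
    exact hasDerivAt_exp_smul_const B t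
  have hbil2 : IsBoundedBilinearMap ℝ
      (fun p : (Matrix (Fin n) (Fin n) ℂ) × (Matrix (Fin n) (Fin m) ℂ) => p.1 * p.2) :=
    { add_left := fun x₁ x₂ y => Matrix.add_mul x₁ x₂ y
      smul_left := fun c x y => Matrix.smul_mul c x y
      add_right := fun x y₁ y₂ => Matrix.mul_add x y₁ y₂
      smul_right := fun c x y => Matrix.mul_smul x c y
      bound := ⟨1, one_pos, fun x y => by
        simpa using Matrix.frobenius_norm_mul x y⟩ }
  have hbil : IsBoundedBilinearMap ℝ
      (fun p : (Matrix (Fin n) (Fin m) ℂ) × (Matrix (Fin m) (Fin m) ℂ) => p.1 * p.2) :=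
    { add_left := fun x₁ x₂ y => Matrix.add_mul x₁ x₂ y
      smul_left := fun c x y => Matrix.smul_mul c x y
      add_right := fun x y₁ y₂ => Matrix.mul_add x y₁ y₂
      smul_right := fun c x y => Matrix.mul_smul x c y
      bound := ⟨1, one_pos, fun x y => by
        simpa using Matrix.frobenius_norm_mul x y⟩ }
  have hderiv : ∀ t : ℝ, HasDerivAt F (F t * B - A * F t) t := by
    intro t
    have h1 : HasDerivAt (fun t : ℝ => exp (t • (-A)) * Y)
        (((-A) * exp (t • (-A))) * Y) t := by
      have h0 := (hbil2.hasFDerivAt (exp (t • (-A)), Y)).comp_hasDerivAt t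
        ((hE1 t).prodMk (hasDerivAt_const t Y))
      simpa [IsBoundedBilinearMap.deriv_apply, Function.comp_def] using h0
    have h2 : HasDerivAt (fun t : ℝ => exp (t • (-A)) * Y * exp (t • B))
        ((exp (t • (-A)) * Y) * (exp (t • B) * B) +
          (((-A) * exp (t • (-A))) * Y) * exp (t • B)) t := by
      have h0 := (hbil.hasFDerivAt (exp (t • (-A)) * Y, exp (t • B))).comp_hasDerivAt t
        (h1.prodMk (hE2 t))
      simpa [IsBoundedBilinearMap.deriv_apply, Function.comp_def] using h0
    rw [hFeq]
    convert h2 using 1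
    simp only [Matrix.mul_assoc, Matrix.neg_mul, sub_eq_add_neg]
  have hFcont : Continuous F := continuous_iff_continuousAt.mpr fun t => (hderiv t).continuousAt
  -- integrability
  have hgint : IntegrableOn (fun t : ℝ => CY * Real.exp (-(ε * t))) (Set.Ioi (0:ℝ)) volume := by
    have h0 : IntegrableOn (fun t : ℝ => CY * Real.exp (-ε * t)) (Set.Ioi (0:ℝ)) volume :=
      (exp_neg_integrableOn_Ioi 0 hε0).const_mul CY
    simpa only [neg_mul] using h0
  have hFIoi : IntegrableOn F (Set.Ioi (0:ℝ)) volume := by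
    refine Integrable.mono' hgint hFcont.aestronglyMeasurable.restrict ?_
    refine (ae_restrict_iff' measurableSet_Ioi).mpr (ae_of_all _ fun t ht => ?_)
    exact hFb t (le_of_lt ht)
  have hFIci : IntegrableOn F (Set.Ici (0:ℝ)) volume := by
    rwa [integrableOn_Ici_iff_integrableOn_Ioi]
  refine ⟨hFIci, ?_⟩
  -- the Sylvester operator
  set S : Matrix (Fin n) (Fin m) ℂ →ₗ[ℝ] Matrix (Fin n) (Fin m) ℂ :=
    { toFun := fun X => A * X - X * B
      map_add' := fun X Z => by
        simp only [Matrix.mul_add, Matrix.add_mul]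
        abel
      map_smul' := fun c X => by
        simp [Matrix.mul_smul, Matrix.smul_mul, smul_sub] } with hS
  set Sc : Matrix (Fin n) (Fin m) ℂ →L[ℝ] Matrix (Fin n) (Fin m) ℂ :=
    LinearMap.toContinuousLinearMap S with hSc
  have hderiv' : ∀ t ∈ Set.Ioi (0:ℝ), HasDerivAt F (-(Sc (F t))) t := by
    intro t _
    have h0 := hderiv t
    have : -(Sc (F t)) = F t * B - A * F t := by
      show -(A * F t - F t * B) = F t * B - A * F t
      exact neg_sub _ _
    rwa [← this] at h0
  have hSFint : IntegrableOn (fun t => Sc (F t)) (Set.Ioi (0:ℝ)) volume :=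
    Sc.integrable_comp hFIoi
  have hlim : Tendsto F atTop (𝓝 0) := by
    have hg0 : Tendsto (fun t : ℝ => CY * Real.exp (-(ε * t))) atTop (𝓝 0) := by
      have h1 : Tendsto (fun t : ℝ => ε * t) atTop atTop :=
        Tendsto.const_mul_atTop hε0 tendsto_id
      have h2 := Real.tendsto_exp_neg_atTop_nhds_zero.comp h1
      have h3 := h2.const_mul CY
      simpa using h3
    refine squeeze_zero_norm' ?_ hg0
    exact eventually_atTop.mpr ⟨0, fun t ht => hFb t ht⟩
  have hF0 : F 0 = Y := by
    rw [hF]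
    simp [exp_zero]
  have hFTC := integral_Ioi_of_hasDerivAt_of_tendsto
    (hFcont.continuousWithinAt) hderiv' hSFint.neg hlim
  rw [hF0, zero_sub] at hFTC
  have hint : (∫ t in Set.Ioi (0:ℝ), Sc (F t)) = Y := by
    rw [MeasureTheory.integral_neg] at hFTC
    exact neg_injective hFTC
  rw [ContinuousLinearMap.integral_comp_comm Sc hFIoi] at hint
  have hfinal : A * (∫ t in Set.Ioi (0:ℝ), F t) - (∫ t in Set.Ioi (0:ℝ), F t) * B = Y := hint
  rwa [MeasureTheory.integral_Ici_eq_integral_Ioi]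
end

section
/- Let A be an n×n complex matrix all of whose eigenvalues have strictly positive real part, and let B be an m×m complex matrix all of whose eigenvalues have strictly negative real part. Then the Sylvester equation A·X − X·B = Y has at most one solution X for each n×m matrix Y; equivalently, the linear map X ↦ A·X − X·B on n×m complex matrices is injective. -/
open Matrix Polynomial

lemma pow_comm_of_comm {n m : ℕ} {A : Matrix (Fin n) (Fin n) ℂ}
    {B : Matrix (Fin m) (Fin m) ℂ} {X : Matrix (Fin n) (Fin m) ℂ}
    (h : A * X = X * B) (k : ℕ) : (A ^ k) * X = X * (B ^ k) := by
  induction k with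
  | zero => simp
  | succ k ih =>
    rw [pow_succ, pow_succ, Matrix.mul_assoc, h, ← Matrix.mul_assoc, ih, Matrix.mul_assoc]

lemma aeval_comm_of_comm {n m : ℕ} {A : Matrix (Fin n) (Fin n) ℂ}
    {B : Matrix (Fin m) (Fin m) ℂ} {X : Matrix (Fin n) (Fin m) ℂ}
    (h : A * X = X * B) (p : ℂ[X]) :
    (aeval A p) * X = X * (aeval B p) := by
  induction p using Polynomial.induction_on' with
  | add p q hp hq => rw [map_add, map_add, Matrix.add_mul, Matrix.mul_add, hp, hq]
  | monomial k c =>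
    rw [aeval_monomial, aeval_monomial, Algebra.algebraMap_eq_smul_one,
      Algebra.algebraMap_eq_smul_one, smul_one_mul, smul_one_mul, Matrix.smul_mul,
      Matrix.mul_smul, pow_comm_of_comm h]

lemma root_charpoly_mem_spectrum {m : ℕ} (B : Matrix (Fin m) (Fin m) ℂ) (μ : ℂ)
    (h : B.charpoly.eval μ = 0) : μ ∈ spectrum ℂ B := by
  rw [spectrum.mem_iff]
  intro hu
  rw [Matrix.isUnit_iff_isUnit_det _] at hu
  have : B.charpoly.eval μ = ((algebraMap ℂ (Matrix (Fin m) (Fin m) ℂ)) μ - B).det := by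
    rw [Matrix.charpoly, ← Polynomial.coe_evalRingHom, RingHom.map_det]
    congr 1
    ext i j
    by_cases hij : i = j <;>
      simp [charmatrix_apply, hij, Matrix.algebraMap_matrix_apply, Matrix.diagonal_apply]
  rw [this] at h
  rw [h] at hu
  exact (not_isUnit_zero hu).elim

/-- If all eigenvalues of `A` have strictly positive real part and all eigenvalues of `B` have
strictly negative real part, then the Sylvester map `X ↦ A X - X B` is injective, i.e. the
Sylvester equation `A X - X B = Y` has at most one solution for each `Y`. -/
theorem sylvester_map_injective (n m : ℕ)
    (A : Matrix (Fin n) (Fin n) ℂ) (B : Matrix (Fin m) (Fin m) ℂ)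
    (hA : ∀ μ ∈ spectrum ℂ A, 0 < μ.re)
    (hB : ∀ μ ∈ spectrum ℂ B, μ.re < 0) :
    Function.Injective (fun X : Matrix (Fin n) (Fin m) ℂ => A * X - X * B) := by
  rcases Nat.eq_zero_or_pos m with hm | hm
  · subst hm
    intro X Y _
    ext i j
    exact absurd j.2 (by omega)
  intro X Y hXY
  simp only [sub_eq_sub_iff_sub_eq_sub] at hXY
  have h : A * (X - Y) = (X - Y) * B := by
    rw [Matrix.mul_sub, Matrix.sub_mul]
    simpa [sub_eq_sub_iff_sub_eq_sub] using hXY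
  -- apply charpoly of B
  have key : (aeval A B.charpoly) * (X - Y) = 0 := by
    rw [aeval_comm_of_comm h, Matrix.aeval_self_charpoly, Matrix.mul_zero]
  -- aeval A B.charpoly is invertible
  have hdeg : 0 < B.charpoly.degree := by
    rw [Matrix.charpoly_degree_eq_dim]
    simpa [Nat.cast_pos] using hm
  have hspec : (0 : ℂ) ∉ spectrum ℂ (aeval A B.charpoly) := by
    rw [spectrum.map_polynomial_aeval_of_degree_pos A B.charpoly hdeg]
    rintro ⟨μ, hμ, hev⟩
    have hμB : μ ∈ spectrum ℂ B := root_charpoly_mem_spectrum B μ hev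
    exact absurd (hB μ hμB) (not_lt.mpr (le_of_lt (hA μ hμ)))
  have hunit : IsUnit (aeval A B.charpoly) := by
    by_contra hc
    exact hspec (by simpa [spectrum.mem_iff] using hc)
  have hdet : IsUnit (aeval A B.charpoly).det := (Matrix.isUnit_iff_isUnit_det _).mp hunit
  have : X - Y = 0 := by
    calc X - Y = ((aeval A B.charpoly)⁻¹ * aeval A B.charpoly) * (X - Y) := by
          rw [Matrix.nonsing_inv_mul _ hdet, Matrix.one_mul]
      _ = (aeval A B.charpoly)⁻¹ * ((aeval A B.charpoly) * (X - Y)) := by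
          rw [Matrix.mul_assoc]
      _ = 0 := by rw [key, Matrix.mul_zero]
  exact sub_eq_zero.mp this
end

section
/- Let P be a d×d Hermitian positive definite complex matrix and let R be any d×d complex matrix. Then the matrix M = 2·∫₀^∞ exp(-tP) · R · exp(-tP) dt is well-defined (the integral converges) and satisfies (P·M + M·P)/2 = R. -/
open MeasureTheory Matrix NormedSpace
open scoped ComplexOrder

attribute [local instance] Matrix.frobeniusNormedAddCommGroup Matrix.frobeniusNormedSpace

attribute [local instance] Matrix.frobeniusNormedRing Matrix.frobeniusNormedAlgebra

private lemma exp_neg_smul_norm_bound (d : ℕ) (hd : 0 < d) (P : Matrix (Fin d) (Fin d) ℂ) (hP : P.PosDef)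
    (i₀ : Fin d) (hmin : ∀ x' ∈ Finset.univ, hP.1.eigenvalues i₀ ≤ hP.1.eigenvalues x')
    (hμpos : 0 < hP.1.eigenvalues i₀) :
    ∃ C : ℝ, 0 ≤ C ∧ ∀ t : ℝ, 0 ≤ t →
      ‖exp (t • (-P))‖ ≤ C * Real.exp (-(hP.1.eigenvalues i₀ * t)) := by
  classical
  set μ := hP.1.eigenvalues i₀ with hμdef
  set U : Matrix (Fin d) (Fin d) ℂ := (hP.1.eigenvectorUnitary : Matrix (Fin d) (Fin d) ℂ)
    with hU
  have hUU : U * star U = 1 := mem_unitaryGroup_iff.mp (hP.1.eigenvectorUnitary).2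
  have hUinv : U⁻¹ = star U := Matrix.inv_eq_right_inv hUU
  have hUunit : IsUnit U := (Matrix.isUnit_iff_isUnit_det U).mpr (Matrix.isUnit_det_of_right_inverse hUU)
  have hEt : ∀ t : ℝ, exp (t • (-P)) =
      U * diagonal (fun i => Complex.exp (Complex.ofReal (-(t * hP.1.eigenvalues i)))) * star U := by
    intro t
    have h1 : t • (-P) =
        U * diagonal (fun i => (Complex.ofReal (-(t * hP.1.eigenvalues i)))) * U⁻¹ := by
      rw [hUinv]
      conv_lhs => rw [hP.1.spectral_theorem, Unitary.conjStarAlgAut_apply]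
      rw [← hU]
      have hdiag : diagonal (fun i => (Complex.ofReal (-(t * hP.1.eigenvalues i)))) =
          t • -(diagonal ((RCLike.ofReal : ℝ → ℂ) ∘ hP.1.eigenvalues)) := by
        ext i j
        rcases eq_or_ne i j with rfl | h
        · simp [Matrix.diagonal_apply_eq, Complex.real_smul]
        · simp [Matrix.diagonal_apply_ne _ h]
      rw [hdiag]
      simp only [smul_neg, mul_neg, neg_mul, Matrix.mul_smul, Matrix.smul_mul]
    rw [h1, Matrix.exp_conj U _ hUunit, Matrix.exp_diagonal, hUinv]
    have hfun : (exp fun i => ((-(t * hP.1.eigenvalues i) : ℝ) : ℂ))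
        = fun i => Complex.exp ((-(t * hP.1.eigenvalues i) : ℝ) : ℂ) := by
      funext i
      rw [Pi.coe_exp, ← Complex.exp_eq_exp_ℂ]
    rw [hfun]
  refine ⟨‖U‖ * Real.sqrt d * ‖star U‖, by positivity, fun t ht => ?_⟩
  have hdle : ‖diagonal (fun i => Complex.exp (Complex.ofReal (-(t * hP.1.eigenvalues i))))‖
      ≤ Real.sqrt d * Real.exp (-(μ * t)) := by
    rw [Matrix.frobenius_norm_diagonal, PiLp.norm_eq_of_L2]
    have hsum : ∑ i, ‖(WithLp.equiv 2 _).symm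
          (fun i => Complex.exp (Complex.ofReal (-(t * hP.1.eigenvalues i)))) i‖ ^ 2
        ≤ (d : ℝ) * Real.exp (-(μ * t)) ^ 2 := by
      have : ∀ i : Fin d, ‖(WithLp.equiv 2 _).symm
          (fun i => Complex.exp (Complex.ofReal (-(t * hP.1.eigenvalues i)))) i‖ ^ 2
          ≤ Real.exp (-(μ * t)) ^ 2 := by
        intro i
        have h1 : ‖Complex.exp (Complex.ofReal (-(t * hP.1.eigenvalues i)))‖
            = Real.exp (-(t * hP.1.eigenvalues i)) := by
          rw [Complex.norm_exp, Complex.ofReal_re]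
        have h2 : Real.exp (-(t * hP.1.eigenvalues i)) ≤ Real.exp (-(μ * t)) := by
          apply Real.exp_le_exp.mpr
          have := hmin i (Finset.mem_univ i)
          nlinarith
        simp only [WithLp.equiv_symm_apply, PiLp.toLp_apply, h1]
        exact pow_le_pow_left₀ (Real.exp_nonneg _) h2 2
      calc ∑ i, _ ≤ ∑ _i : Fin d, Real.exp (-(μ * t)) ^ 2 :=
            Finset.sum_le_sum (fun i _ => this i)
        _ = (d : ℝ) * Real.exp (-(μ * t)) ^ 2 := by
            rw [Finset.sum_const]; simp [mul_comm]
    calc Real.sqrt (∑ i, _) ≤ Real.sqrt ((d : ℝ) * Real.exp (-(μ * t)) ^ 2) :=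
          Real.sqrt_le_sqrt hsum
      _ = Real.sqrt d * Real.exp (-(μ * t)) := by
          rw [Real.sqrt_mul (by positivity), Real.sqrt_sq (Real.exp_nonneg _)]
  rw [hEt t]
  calc ‖U * diagonal (fun i => Complex.exp (Complex.ofReal (-(t * hP.1.eigenvalues i)))) * star U‖
      ≤ ‖U‖ * ‖diagonal (fun i => Complex.exp (Complex.ofReal (-(t * hP.1.eigenvalues i))))‖
        * ‖star U‖ := (norm_mul_le _ _).trans (by gcongr; exact norm_mul_le _ _)
    _ ≤ ‖U‖ * (Real.sqrt d * Real.exp (-(μ * t))) * ‖star U‖ := by gcongr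
    _ = ‖U‖ * Real.sqrt d * ‖star U‖ * Real.exp (-(μ * t)) := by ring

/-- For a Hermitian positive definite `P` and any `R`, the integral
`M = 2 ∫₀^∞ exp(-tP) R exp(-tP) dt` converges and satisfies `(P M + M P)/2 = R`. -/
theorem anticommutator_inverse_integral (d : ℕ)
    (P : Matrix (Fin d) (Fin d) ℂ) (hP : P.PosDef)
    (R : Matrix (Fin d) (Fin d) ℂ) :
    @IntegrableOn _ _ _ _
      (Matrix.frobeniusNormedAddCommGroup.toSeminormedAddCommGroup.toSeminormedAddGroup.toContinuousENorm)
      (fun t : ℝ => exp (-(t • P)) * R * exp (-(t • P))) (Set.Ici 0) volume ∧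
      (P * ((2 : ℂ) • ∫ t in Set.Ici (0:ℝ), exp (-(t • P)) * R * exp (-(t • P)))
        + ((2 : ℂ) • ∫ t in Set.Ici (0:ℝ), exp (-(t • P)) * R * exp (-(t • P))) * P)
        / 2 = R := by
  classical
  letI : ContinuousENorm (Matrix (Fin d) (Fin d) ℂ) :=
    Matrix.frobeniusNormedAddCommGroup.toSeminormedAddCommGroup.toSeminormedAddGroup.toContinuousENorm
  letI : TopologicalSpace.PseudoMetrizableSpace (Matrix (Fin d) (Fin d) ℂ) :=
    inferInstanceAs (TopologicalSpace.PseudoMetrizableSpace (Fin d → Fin d → ℂ))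
  rcases Nat.eq_zero_or_pos d with hd | hd
  · subst hd
    have hsub : Subsingleton (Matrix (Fin 0) (Fin 0) ℂ) :=
      ⟨fun a b => by ext i; exact i.elim0⟩
    constructor
    · have h0 : (fun t : ℝ => exp (-(t • P)) * R * exp (-(t • P)))
          = fun _ : ℝ => (0 : Matrix (Fin 0) (Fin 0) ℂ) := by
        funext t; exact hsub.elim _ _
      rw [h0]
      exact integrableOn_zero
    · exact hsub.elim _ _
  -- main case
  have hne : Nonempty (Fin d) := ⟨⟨0, hd⟩⟩
  simp only [← smul_neg]
  set A : Matrix (Fin d) (Fin d) ℂ := -P with hAdef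
  set E : ℝ → Matrix (Fin d) (Fin d) ℂ := fun t => exp (t • A) with hEdef
  set F : ℝ → Matrix (Fin d) (Fin d) ℂ := fun t => E t * R * E t with hFdef
  -- minimal eigenvalue
  obtain ⟨i₀, -, hmin⟩ := Finset.exists_min_image Finset.univ hP.1.eigenvalues
    Finset.univ_nonempty
  set μ : ℝ := hP.1.eigenvalues i₀ with hμdef
  have hμpos : 0 < μ := hP.eigenvalues_pos i₀
  -- norm bound on E
  have key : ∃ C : ℝ, 0 ≤ C ∧ ∀ t : ℝ, 0 ≤ t → ‖E t‖ ≤ C * Real.exp (-(μ * t)) :=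
    exp_neg_smul_norm_bound d hd P hP i₀ hmin hμpos
  obtain ⟨C, hC0, hC⟩ := key
  -- bound on F
  have hFle : ∀ t : ℝ, 0 ≤ t → ‖F t‖ ≤ C * C * ‖R‖ * Real.exp (-(2 * μ) * t) := by
    intro t ht
    have h1 : ‖F t‖ ≤ ‖E t‖ * ‖R‖ * ‖E t‖ :=
      (norm_mul_le _ _).trans (by gcongr; exact norm_mul_le _ _)
    have h2 : ‖E t‖ ≤ C * Real.exp (-(μ * t)) := hC t ht
    calc ‖F t‖ ≤ ‖E t‖ * ‖R‖ * ‖E t‖ := h1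
      _ ≤ (C * Real.exp (-(μ * t))) * ‖R‖ * (C * Real.exp (-(μ * t))) := by
          gcongr <;> positivity
      _ = C * C * ‖R‖ * (Real.exp (-(μ * t)) * Real.exp (-(μ * t))) := by ring
      _ = C * C * ‖R‖ * Real.exp (-(2 * μ) * t) := by
          rw [← Real.exp_add]; ring_nf
  -- continuity
  have hEcont : Continuous E := by
    exact exp_continuous.comp (continuous_id.smul continuous_const)
  have hFcont : Continuous F := (hEcont.mul continuous_const).mul hEcont
  -- integrability on Ioi 0
  have hFint : IntegrableOn F (Set.Ioi 0) volume := by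
    refine Integrable.mono'
      (((exp_neg_integrableOn_Ioi 0 (by positivity : (0:ℝ) < 2 * μ))).const_mul
        (C * C * ‖R‖))
      hFcont.aestronglyMeasurable.restrict ?_
    filter_upwards [ae_restrict_mem measurableSet_Ioi] with t ht
    simpa [neg_mul] using hFle t (le_of_lt ht)
  -- tendsto 0
  have hF0 : Filter.Tendsto F Filter.atTop (nhds 0) := by
    have h1 : Filter.Tendsto (fun t : ℝ => -(2 * μ) * t) Filter.atTop Filter.atBot := by
      exact Filter.Tendsto.const_mul_atTop_of_neg (by linarith) Filter.tendsto_id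
    have hg0 : Filter.Tendsto (fun t => C * C * ‖R‖ * Real.exp (-(2 * μ) * t))
        Filter.atTop (nhds 0) := by
      simpa using (Real.tendsto_exp_atBot.comp h1).const_mul (C * C * ‖R‖)
    exact squeeze_zero_norm' ((Filter.eventually_ge_atTop 0).mono hFle) hg0
  -- derivative
  have hcommA : ∀ t : ℝ, A * E t = E t * A := fun t =>
    (((Commute.refl A).smul_right t).exp_right).eq
  have hker : ∀ t : ℝ, HasDerivAt F (-(P * F t + F t * P)) t := by
    intro t
    have h1 : HasDerivAt E (A * E t) t := by
      have h := hasDerivAt_exp_smul_const' (𝕂 := ℝ) A t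
      exact h
    have h3 := (h1.mul_const R).mul h1
    have heq : A * E t * R * E t + E t * R * (A * E t) = -(P * F t + F t * P) := by
      have h4 : E t * R * (A * E t) = E t * R * E t * A := by
        rw [hcommA t, ← mul_assoc]
      rw [h4, hAdef]
      simp only [hFdef, neg_mul, mul_neg, neg_add, mul_assoc]
    rw [heq] at h3
    exact h3
  -- FTC
  have hint1 : IntegrableOn (fun t => P * F t) (Set.Ioi 0) volume :=
    (ContinuousLinearMap.mul ℂ (Matrix (Fin d) (Fin d) ℂ) P).integrable_comp hFint
  have hint2 : IntegrableOn (fun t => F t * P) (Set.Ioi 0) volume :=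
    ((ContinuousLinearMap.mul ℂ (Matrix (Fin d) (Fin d) ℂ)).flip P).integrable_comp hFint
  have hGint : IntegrableOn (fun t => -(P * F t + F t * P)) (Set.Ioi 0) volume :=
    (hint1.add hint2).neg
  have hF0val : F 0 = R := by
    simp [hFdef, hEdef, zero_smul, exp_zero]
  have hFTC := integral_Ioi_of_hasDerivAt_of_tendsto' (a := 0) (f := F)
      (fun t _ => hker t) hGint hF0
  rw [hF0val, zero_sub] at hFTC
  -- compute the integral of the derivative
  set I : Matrix (Fin d) (Fin d) ℂ := ∫ t in Set.Ioi (0:ℝ), F t with hIdef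
  have hlin : (∫ t in Set.Ioi (0:ℝ), -(P * F t + F t * P)) = -(P * I + I * P) := by
    rw [integral_neg, integral_add hint1 hint2]
    have e1 : (∫ t in Set.Ioi (0:ℝ), P * F t) = P * I :=
      (ContinuousLinearMap.mul ℂ (Matrix (Fin d) (Fin d) ℂ) P).integral_comp_comm hFint
    have e2 : (∫ t in Set.Ioi (0:ℝ), F t * P) = I * P :=
      ((ContinuousLinearMap.mul ℂ (Matrix (Fin d) (Fin d) ℂ)).flip P).integral_comp_comm hFint
    rw [e1, e2]
  have hmain : P * I + I * P = R := by
    have := hlin.symm.trans hFTC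
    exact neg_injective this
  constructor
  · exact (integrableOn_Ici_iff_integrableOn_Ioi).mpr hFint
  · rw [MeasureTheory.integral_Ici_eq_integral_Ioi]
    have h2 : (2 : Matrix (Fin d) (Fin d) ℂ) = (2:ℂ) • 1 := by
      rw [two_smul ℂ, one_add_one_eq_two]
    have hinv : (2 : Matrix (Fin d) (Fin d) ℂ)⁻¹ = (2:ℂ)⁻¹ • 1 :=
      Matrix.inv_eq_right_inv (by rw [mul_smul_comm, mul_one, h2, smul_smul]; norm_num)
    rw [← hIdef, mul_smul_comm, smul_mul_assoc, ← smul_add, hmain, div_eq_mul_inv, hinv,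
      smul_mul_assoc, mul_smul_comm, mul_one, smul_smul]
    norm_num
end

section
/- Let 𝓔 be a linear trace-preserving map on d×d complex matrices with Choi–Jamiołkowski matrix M = Σ_{i,j} E_{ij} ⊗ 𝓔(E_{ji}), let ρ be any d×d complex matrix, and let R = ((ρ⊗𝟙)·M + M·(ρ⊗𝟙))/2. Then the partial trace of R over the second tensor factor equals ρ: for all i,j, Σ_k R_{(i,k),(j,k)} = ρ_{ij}. -/
open Matrix
open scoped Kronecker

lemma pdm_aux_left (d : ℕ)
    (𝓔 : Matrix (Fin d) (Fin d) ℂ →ₗ[ℂ] Matrix (Fin d) (Fin d) ℂ)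
    (htr : ∀ a b : Fin d, ∑ k, (𝓔 (Matrix.single a b 1)) k k = if a = b then (1:ℂ) else 0)
    (ρ : Matrix (Fin d) (Fin d) ℂ) (i j : Fin d) :
    (∑ k : Fin d, ((ρ ⊗ₖ (1 : Matrix (Fin d) (Fin d) ℂ)) *
      (∑ p : Fin d, ∑ q : Fin d,
        Matrix.single p q (1 : ℂ) ⊗ₖ 𝓔 (Matrix.single q p (1 : ℂ)))) (i, k) (j, k)) = ρ i j := by
  have hE : ∀ (p a q b : Fin d), Matrix.single p q (1:ℂ) a b
      = if q = b ∧ p = a then 1 else 0 := by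
    intro p a q b; simp [Matrix.single, and_comm]
  simp only [Matrix.mul_apply, Matrix.sum_apply, Matrix.kroneckerMap_apply,
    Fintype.sum_prod_type, Matrix.one_apply, hE, mul_ite, mul_one, mul_zero, ite_mul,
    zero_mul, one_mul, Finset.sum_ite_eq, Finset.sum_ite_eq', Finset.mem_univ, if_true]
  simp only [ite_and, Finset.sum_ite_eq, Finset.sum_ite_eq', Finset.mem_univ, if_true]
  rw [Finset.sum_comm]
  simp only [← Finset.mul_sum, htr, mul_ite, mul_one, mul_zero,
    Finset.sum_ite_eq, Finset.sum_ite_eq', Finset.mem_univ, if_true]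

lemma pdm_aux_right (d : ℕ)
    (𝓔 : Matrix (Fin d) (Fin d) ℂ →ₗ[ℂ] Matrix (Fin d) (Fin d) ℂ)
    (htr : ∀ a b : Fin d, ∑ k, (𝓔 (Matrix.single a b 1)) k k = if a = b then (1:ℂ) else 0)
    (ρ : Matrix (Fin d) (Fin d) ℂ) (i j : Fin d) :
    (∑ k : Fin d, ((∑ p : Fin d, ∑ q : Fin d,
        Matrix.single p q (1 : ℂ) ⊗ₖ 𝓔 (Matrix.single q p (1 : ℂ))) *
      (ρ ⊗ₖ (1 : Matrix (Fin d) (Fin d) ℂ))) (i, k) (j, k)) = ρ i j := by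
  have hE : ∀ (p a q b : Fin d), Matrix.single p q (1:ℂ) a b
      = if q = b ∧ p = a then 1 else 0 := by
    intro p a q b; simp [Matrix.single, and_comm]
  simp only [Matrix.mul_apply, Matrix.sum_apply, Matrix.kroneckerMap_apply,
    Fintype.sum_prod_type, Matrix.one_apply, hE, mul_ite, mul_one, mul_zero, ite_mul,
    zero_mul, one_mul, Finset.sum_ite_eq, Finset.sum_ite_eq', Finset.mem_univ, if_true]
  simp only [ite_and, Finset.sum_ite_eq, Finset.sum_ite_eq', Finset.mem_univ, if_true]
  rw [Finset.sum_comm]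
  simp only [← Finset.sum_mul, htr, mul_ite, mul_one, mul_zero, ite_mul, zero_mul, one_mul,
    Finset.sum_ite_eq, Finset.sum_ite_eq', Finset.mem_univ, if_true]

/-- For a trace-preserving linear map `𝓔` with Choi–Jamiołkowski matrix
`M = Σ_{i,j} E_{ij} ⊗ 𝓔(E_{ji})` and PDM `R = ((ρ⊗𝟙)M + M(ρ⊗𝟙))/2`, the partial trace of `R`
over the second tensor factor is `ρ`. -/
theorem pdm_partialTrace_second (d : ℕ)
    (𝓔 : Matrix (Fin d) (Fin d) ℂ →ₗ[ℂ] Matrix (Fin d) (Fin d) ℂ)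
    (h𝓔 : ∀ X : Matrix (Fin d) (Fin d) ℂ, (𝓔 X).trace = X.trace)
    (ρ : Matrix (Fin d) (Fin d) ℂ)
    (M : Matrix (Fin d × Fin d) (Fin d × Fin d) ℂ)
    (hM : M = ∑ i : Fin d, ∑ j : Fin d,
      Matrix.single i j (1 : ℂ) ⊗ₖ 𝓔 (Matrix.single j i (1 : ℂ)))
    (R : Matrix (Fin d × Fin d) (Fin d × Fin d) ℂ)
    (hR : R = ((ρ ⊗ₖ (1 : Matrix (Fin d) (Fin d) ℂ)) * M
      + M * (ρ ⊗ₖ (1 : Matrix (Fin d) (Fin d) ℂ))) / 2) :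
    ∀ i j : Fin d, (∑ k : Fin d, R (i, k) (j, k)) = ρ i j := by
  intro i j
  have htr : ∀ a b : Fin d, ∑ k, (𝓔 (Matrix.single a b 1)) k k
      = if a = b then (1:ℂ) else 0 := by
    intro a b
    have h := h𝓔 (Matrix.single a b 1)
    have hs : ∑ k, (𝓔 (Matrix.single a b 1)) k k = (𝓔 (Matrix.single a b 1)).trace := rfl
    rw [hs, h]
    by_cases hab : a = b
    · subst hab; simp [Matrix.trace_single_eq_same]
    · simp [Matrix.trace_single_eq_of_ne (h := hab), hab]
  have hdiv : ∀ A : Matrix (Fin d × Fin d) (Fin d × Fin d) ℂ, A / 2 = (2⁻¹ : ℂ) • A := by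
    intro A
    have h : (2 : Matrix (Fin d × Fin d) (Fin d × Fin d) ℂ) = (2:ℂ) • 1 := by
      rw [two_smul, one_add_one_eq_two]
    have hinv : ((2:ℂ) • (1 : Matrix (Fin d × Fin d) (Fin d × Fin d) ℂ))⁻¹
        = (2⁻¹:ℂ) • 1 := Matrix.inv_eq_right_inv (by
      rw [Matrix.smul_mul, Matrix.mul_smul, smul_smul, one_mul]
      norm_num)
    rw [div_eq_mul_inv, h, hinv, Matrix.mul_smul, mul_one]
  subst hR hM
  rw [hdiv]
  simp only [Matrix.smul_apply, Matrix.add_apply, smul_eq_mul, ← Finset.mul_sum,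
    Finset.sum_add_distrib]
  rw [pdm_aux_left d 𝓔 htr ρ i j, pdm_aux_right d 𝓔 htr ρ i j]
  ring
end

section
/- Let 𝓔 be a linear map on d×d complex matrices with Choi–Jamiołkowski matrix M = Σ_{i,j} E_{ij} ⊗ 𝓔(E_{ji}), let ρ be any d×d complex matrix, and let R = ((ρ⊗𝟙)·M + M·(ρ⊗𝟙))/2. Then the partial trace of R over the first tensor factor equals 𝓔(ρ): for all i,j, Σ_k R_{(k,i),(k,j)} = (𝓔(ρ))_{ij}. -/
open Matrix
open scoped Kronecker

private lemma half_left (d : ℕ)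
    (𝓔 : Matrix (Fin d) (Fin d) ℂ →ₗ[ℂ] Matrix (Fin d) (Fin d) ℂ)
    (ρ : Matrix (Fin d) (Fin d) ℂ) (i j : Fin d) :
    (∑ k : Fin d, ((ρ ⊗ₖ (1 : Matrix (Fin d) (Fin d) ℂ)) *
      (∑ p : Fin d, ∑ q : Fin d,
      Matrix.single p q (1 : ℂ) ⊗ₖ 𝓔 (Matrix.single q p (1 : ℂ)))) (k, i) (k, j))
      = 𝓔 ρ i j := by
  have hρ : 𝓔 ρ i j = ∑ p, ∑ q, ρ p q * (𝓔 (Matrix.single p q 1)) i j := by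
    conv_lhs => rw [matrix_eq_sum_single ρ]
    rw [map_sum, Matrix.sum_apply]
    refine Finset.sum_congr rfl fun p _ => ?_
    rw [map_sum, Matrix.sum_apply]
    refine Finset.sum_congr rfl fun q _ => ?_
    rw [show Matrix.single p q (ρ p q) = ρ p q • Matrix.single p q (1:ℂ) by
      rw [smul_single, smul_eq_mul, mul_one], _root_.map_smul]
    simp
  rw [hρ]
  simp [Matrix.mul_apply, Matrix.sum_apply, kroneckerMap_apply, Fintype.sum_prod_type,
    Matrix.single, Matrix.one_apply, Finset.mul_sum, Finset.sum_mul, ite_and,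
    Finset.sum_ite_eq, Finset.sum_ite_eq']

private lemma half_right (d : ℕ)
    (𝓔 : Matrix (Fin d) (Fin d) ℂ →ₗ[ℂ] Matrix (Fin d) (Fin d) ℂ)
    (ρ : Matrix (Fin d) (Fin d) ℂ) (i j : Fin d) :
    (∑ k : Fin d, ((∑ p : Fin d, ∑ q : Fin d,
      Matrix.single p q (1 : ℂ) ⊗ₖ 𝓔 (Matrix.single q p (1 : ℂ))) *
      (ρ ⊗ₖ (1 : Matrix (Fin d) (Fin d) ℂ))) (k, i) (k, j))
      = 𝓔 ρ i j := by
  have hρ : 𝓔 ρ i j = ∑ p, ∑ q, ρ p q * (𝓔 (Matrix.single p q 1)) i j := by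
    conv_lhs => rw [matrix_eq_sum_single ρ]
    rw [map_sum, Matrix.sum_apply]
    refine Finset.sum_congr rfl fun p _ => ?_
    rw [map_sum, Matrix.sum_apply]
    refine Finset.sum_congr rfl fun q _ => ?_
    rw [show Matrix.single p q (ρ p q) = ρ p q • Matrix.single p q (1:ℂ) by
      rw [smul_single, smul_eq_mul, mul_one], _root_.map_smul]
    simp
  rw [hρ]
  simp [Matrix.mul_apply, Matrix.sum_apply, kroneckerMap_apply, Fintype.sum_prod_type,
    Matrix.single, Matrix.one_apply, Finset.mul_sum, Finset.sum_mul, ite_and,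
    Finset.sum_ite_eq, Finset.sum_ite_eq']
  rw [Finset.sum_comm]
  exact Finset.sum_congr rfl fun p _ => Finset.sum_congr rfl fun q _ => mul_comm _ _

private lemma div_two_eq (d : ℕ) (A : Matrix (Fin d × Fin d) (Fin d × Fin d) ℂ) :
    A / 2 = (2:ℂ)⁻¹ • A := by
  rw [div_eq_mul_inv]
  have h2 : (2 : Matrix (Fin d × Fin d) (Fin d × Fin d) ℂ)⁻¹ = (2:ℂ)⁻¹ • 1 := by
    apply inv_eq_right_inv
    rw [show (2 : Matrix (Fin d × Fin d) (Fin d × Fin d) ℂ) = (2:ℂ) • 1 by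
      rw [← one_add_one_eq_two, ← one_add_one_eq_two, add_smul, one_smul]]
    rw [smul_mul_smul_comm, mul_one, mul_inv_cancel₀ (by norm_num), one_smul]
  rw [h2, mul_smul_comm, mul_one]

/-- For a linear map `𝓔` with Choi–Jamiołkowski matrix `M = Σ_{i,j} E_{ij} ⊗ 𝓔(E_{ji})` and
PDM `R = ((ρ⊗𝟙)M + M(ρ⊗𝟙))/2`, the partial trace of `R` over the first tensor factor
is `𝓔(ρ)`. -/
theorem pdm_partialTrace_first (d : ℕ)
    (𝓔 : Matrix (Fin d) (Fin d) ℂ →ₗ[ℂ] Matrix (Fin d) (Fin d) ℂ)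
    (ρ : Matrix (Fin d) (Fin d) ℂ)
    (M : Matrix (Fin d × Fin d) (Fin d × Fin d) ℂ)
    (hM : M = ∑ i : Fin d, ∑ j : Fin d,
      Matrix.single i j (1 : ℂ) ⊗ₖ 𝓔 (Matrix.single j i (1 : ℂ)))
    (R : Matrix (Fin d × Fin d) (Fin d × Fin d) ℂ)
    (hR : R = ((ρ ⊗ₖ (1 : Matrix (Fin d) (Fin d) ℂ)) * M
      + M * (ρ ⊗ₖ (1 : Matrix (Fin d) (Fin d) ℂ))) / 2) :
    ∀ i j : Fin d, (∑ k : Fin d, R (k, i) (k, j)) = 𝓔 ρ i j := by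
  intro i j
  subst hM hR
  rw [div_two_eq]
  simp only [Matrix.smul_apply, Matrix.add_apply, smul_eq_mul, ← Finset.mul_sum,
    Finset.sum_add_distrib]
  rw [half_left, half_right]
  ring
end

section
/- Let 𝓔 be a linear map on d×d complex matrices with Choi–Jamiołkowski matrix M = Σ_{i,j} E_{ij} ⊗ 𝓔(E_{ji}), let ρ be a d×d complex matrix, let R = ((ρ⊗𝟙)·M + M·(ρ⊗𝟙))/2, and let S = Σ_{i,j} E_{ij} ⊗ E_{ji} be the swap operator. Then S·R·S† = (1/2)·Σ_{i,j} 𝓔(ρ·E_{ji} + E_{ji}·ρ) ⊗ E_{ij}. -/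
open Matrix
open scoped Kronecker

lemma div_two_eq_smul {n : Type*} [Fintype n] [DecidableEq n]
    (A : Matrix n n ℂ) : A / 2 = (1/2 : ℂ) • A := by
  rw [div_eq_mul_inv]
  rw [Matrix.inv_eq_right_inv (B := (1/2:ℂ) • (1 : Matrix n n ℂ)) (by
    rw [Matrix.mul_smul, mul_one]
    ext i j
    rw [show (2 : Matrix n n ℂ) = 1 + 1 from one_add_one_eq_two.symm]
    by_cases h : i = j <;> simp [h, Matrix.one_apply] <;> norm_num)]
  rw [Matrix.mul_smul, mul_one]

/-- For the PDM `R = ((ρ⊗𝟙)M + M(ρ⊗𝟙))/2` built from the Choi–Jamiołkowski matrix of a linear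
map `𝓔`, its time reversal satisfies `S R S† = (1/2) Σ_{i,j} 𝓔(ρ E_{ji} + E_{ji} ρ) ⊗ E_{ij}`. -/
theorem backward_pdm_closed_form (d : ℕ)
    (𝓔 : Matrix (Fin d) (Fin d) ℂ →ₗ[ℂ] Matrix (Fin d) (Fin d) ℂ)
    (ρ : Matrix (Fin d) (Fin d) ℂ)
    (M : Matrix (Fin d × Fin d) (Fin d × Fin d) ℂ)
    (hM : M = ∑ i : Fin d, ∑ j : Fin d,
      Matrix.single i j (1 : ℂ) ⊗ₖ 𝓔 (Matrix.single j i (1 : ℂ)))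
    (R : Matrix (Fin d × Fin d) (Fin d × Fin d) ℂ)
    (hR : R = ((ρ ⊗ₖ (1 : Matrix (Fin d) (Fin d) ℂ)) * M
      + M * (ρ ⊗ₖ (1 : Matrix (Fin d) (Fin d) ℂ))) / 2)
    (S : Matrix (Fin d × Fin d) (Fin d × Fin d) ℂ)
    (hS : S = ∑ i : Fin d, ∑ j : Fin d,
      Matrix.single i j (1 : ℂ) ⊗ₖ Matrix.single j i (1 : ℂ)) :
    S * R * Sᴴ = (1/2 : ℂ) • ∑ i : Fin d, ∑ j : Fin d,
      𝓔 (ρ * Matrix.single j i (1 : ℂ) + Matrix.single j i (1 : ℂ) * ρ)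
        ⊗ₖ Matrix.single i j (1 : ℂ) := by
  have hS' : ∀ x y : Fin d × Fin d, S x y = if y = (x.2, x.1) then 1 else 0 := by
    rintro ⟨a, b⟩ ⟨c, e⟩
    simp only [hS, Matrix.sum_apply, Matrix.kroneckerMap_apply, Matrix.single,
      Matrix.of_apply, Prod.mk.injEq]
    simp [ite_and, Finset.sum_ite_eq, Finset.sum_ite_eq', and_comm, eq_comm]
  have hswap : ∀ x y : Fin d × Fin d, (S * R * Sᴴ) x y = R (x.2, x.1) (y.2, y.1) := by
    intro x y
    simp [Matrix.mul_apply, Matrix.conjTranspose_apply, hS', apply_ite, ite_mul, mul_ite,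
      Finset.sum_ite_eq, Finset.sum_ite_eq']
  have hM' : ∀ x y u v : Fin d, M (x,y) (u,v) = 𝓔 (Matrix.single u x (1:ℂ)) y v := by
    intro x y u v
    simp [hM, Matrix.sum_apply, Matrix.kroneckerMap_apply, Matrix.single, ite_and,
      Finset.sum_ite_eq, Finset.sum_ite_eq', mul_ite, ite_mul]
  have hmul₁ : ∀ e b : Fin d,
      ρ * Matrix.single e b (1:ℂ) = ∑ k, ρ k e • Matrix.single k b (1:ℂ) := by
    intro e b; ext i j
    simp [Matrix.mul_apply, Matrix.sum_apply, Matrix.single, ite_and, Finset.sum_ite_eq,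
      Finset.sum_ite_eq', mul_ite, ite_mul]
  have hmul₂ : ∀ e b : Fin d,
      Matrix.single e b (1:ℂ) * ρ = ∑ k, ρ b k • Matrix.single e k (1:ℂ) := by
    intro e b; ext i j
    simp [Matrix.mul_apply, Matrix.sum_apply, Matrix.single, ite_and, Finset.sum_ite_eq,
      Finset.sum_ite_eq', mul_ite, ite_mul]
  ext ⟨a, b⟩ ⟨c, e⟩
  rw [hswap]
  rw [hR, div_two_eq_smul]
  -- LHS entry
  have hL : (((ρ ⊗ₖ (1 : Matrix (Fin d) (Fin d) ℂ)) * M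
      + M * (ρ ⊗ₖ (1 : Matrix (Fin d) (Fin d) ℂ)))) (b, a) (e, c)
      = (∑ k, ρ b k * 𝓔 (Matrix.single e k (1:ℂ)) a c)
        + (∑ k, 𝓔 (Matrix.single k b (1:ℂ)) a c * ρ k e) := by
    rw [Matrix.add_apply, Matrix.mul_apply, Matrix.mul_apply]
    rw [Fintype.sum_prod_type]
    congr 1
    · simp [Matrix.kroneckerMap_apply, Matrix.one_apply, hM', mul_ite, ite_mul,
        Finset.sum_ite_eq, Finset.sum_ite_eq']
    · rw [Fintype.sum_prod_type]
      simp [Matrix.kroneckerMap_apply, Matrix.one_apply, hM', mul_ite, ite_mul,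
        Finset.sum_ite_eq, Finset.sum_ite_eq', mul_comm]
  rw [Matrix.smul_apply, hL]
  -- RHS entry
  rw [Matrix.smul_apply, Matrix.sum_apply]
  simp only [Matrix.sum_apply, Matrix.kroneckerMap_apply]
  rw [show ∀ x : ℂ, (1/2:ℂ) • x = (1/2:ℂ) * x from fun _ => rfl,
      show ∀ x : ℂ, (1/2:ℂ) • x = (1/2:ℂ) * x from fun _ => rfl]
  congr 1
  have hcollapse : (∑ i : Fin d, ∑ j : Fin d,
      𝓔 (ρ * Matrix.single j i (1 : ℂ) + Matrix.single j i (1 : ℂ) * ρ) a c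
        * Matrix.single i j (1:ℂ) b e)
      = 𝓔 (ρ * Matrix.single e b (1 : ℂ) + Matrix.single e b (1 : ℂ) * ρ) a c := by
    simp [Matrix.single, ite_and, mul_ite, ite_mul, Finset.sum_ite_eq,
      Finset.sum_ite_eq']
  rw [hcollapse, map_add, Matrix.add_apply, hmul₁, hmul₂, map_sum, map_sum]
  simp only [_root_.map_smul, Matrix.sum_apply, Matrix.smul_apply, smul_eq_mul]
  rw [add_comm]
  congr 1
  exact Finset.sum_congr rfl fun k _ => mul_comm _ _
end

section
/- For a real parameter a with 0 < a < 1, let M̄(a) be the 4×4 Hermitian matrix with rows [1, a/(4−2a), 0, 0], [a/(4−2a), 0, 0, 0], [0, 0, 0, 1/2], [0, 0, 1/2, 1]. Then (1−√2)/2 and 1/2 − √(a² + (2−a)²)/(2(2−a)) are eigenvalues of M̄(a), both are strictly negative, and hence M̄(a) is not positive semidefinite. -/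
/-!
`M̄(a)` is block diagonal with the two 2×2 blocks `[[1, c], [c, 0]]`, `c = a/(4-2a)`, and
`[[0, 1/2], [1/2, 1]]`, so its eigenvalues are the roots of `z(z-1) = c²` and `z(z-1) = 1/4`.
Both smaller roots have the shape `1/2 - √e/(2m)` with `m² < e`, hence are negative, and a
positive semidefinite matrix has no negative eigenvalue.
-/

open Matrix
open scoped ComplexOrder

theorem Matrix.not_posSemidef_of_ofReal_mem_spectrum {n 𝕜 : Type*} [Fintype n] [DecidableEq n]
    [RCLike 𝕜] {A : Matrix n n 𝕜} {x : ℝ} (hx : (x : 𝕜) ∈ spectrum 𝕜 A) (hneg : x < 0) :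
    ¬ A.PosSemidef := fun hA =>
  hneg.not_ge <| RCLike.ofReal_nonneg.mp <|
    (posSemidef_iff_isHermitian_and_spectrum_nonneg.mp hA).2 hx

theorem Matrix.mem_spectrum_blockDiagonal_two_iff {K : Type*} [Field K]
    (p q r s t u v w z : K) :
    z ∈ spectrum K !![p, q, 0, 0; r, s, 0, 0; 0, 0, t, u; 0, 0, v, w] ↔
      (z - p) * (z - s) - q * r = 0 ∨ (z - t) * (z - w) - u * v = 0 := by
  rw [mem_spectrum_iff_isRoot_charpoly, Polynomial.IsRoot.def, eval_charpoly, ← mul_eq_zero]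
  refine Iff.of_eq (congrArg (· = 0) ?_)
  simp [det_succ_row_zero, Fin.sum_univ_succ, Fin.succAbove]
  ring

theorem half_sub_sqrt_div_mul_sub_one {m e : ℝ} (hm : m ≠ 0) (he : 0 ≤ e) :
    (1 / 2 - √e / (2 * m)) * (1 / 2 - √e / (2 * m) - 1) = (e - m ^ 2) / (4 * m ^ 2) := by
  field_simp
  linear_combination 4 * Real.sq_sqrt he

theorem half_sub_sqrt_div_neg {m e : ℝ} (hm : 0 < m) (h : m ^ 2 < e) :
    1 / 2 - √e / (2 * m) < 0 := by
  rw [sub_neg, lt_div_iff₀ (by positivity), ← Real.sqrt_sq hm.le]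
  nlinarith [Real.sqrt_lt_sqrt (sq_nonneg m) h]

/-- The backward Choi–Jamiołkowski matrix `M̄(a)` from the paper's decohering-channel example
has the strictly negative eigenvalues `(1-√2)/2` and `1/2 - √(a² + (2-a)²)/(2(2-a))`, hence is
not positive semidefinite. -/
theorem backward_choi_not_posSemidef (a : ℝ) (ha : 0 < a) (ha' : a < 1)
    (Mbar : Matrix (Fin 4) (Fin 4) ℂ)
    (hMbar : Mbar = !![1, (a : ℂ)/(4 - 2*a), 0, 0;
                      (a : ℂ)/(4 - 2*a), 0, 0, 0;
                      0, 0, 0, 1/2;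
                      0, 0, 1/2, 1]) :
    (((1 - Real.sqrt 2)/2 : ℝ) : ℂ) ∈ spectrum ℂ Mbar ∧
    ((((1:ℝ)/2 - Real.sqrt (a^2 + (2 - a)^2)/(2*(2 - a))) : ℝ) : ℂ) ∈ spectrum ℂ Mbar ∧
    ((1 - Real.sqrt 2)/2 : ℝ) < 0 ∧
    ((1:ℝ)/2 - Real.sqrt (a^2 + (2 - a)^2)/(2*(2 - a))) < 0 ∧
    ¬ Mbar.PosSemidef := by
  have h2a : 0 < 2 - a := by linarith
  have hshape₁ : (1 - √2) / 2 = 1 / 2 - √2 / (2 * 1) := by ring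
  have hroot₁ : (1 - √2) / 2 * ((1 - √2) / 2 - 1) = 1 / 4 := by
    rw [hshape₁, half_sub_sqrt_div_mul_sub_one one_ne_zero zero_le_two]
    norm_num
  have hroot₂ : (1 / 2 - √(a ^ 2 + (2 - a) ^ 2) / (2 * (2 - a))) *
      (1 / 2 - √(a ^ 2 + (2 - a) ^ 2) / (2 * (2 - a)) - 1) = (a / (4 - 2 * a)) ^ 2 := by
    rw [half_sub_sqrt_div_mul_sub_one h2a.ne' (by positivity),
      show 4 - 2 * a = 2 * (2 - a) by ring]
    field_simp
    ring
  have hneg₁ : (1 - √2) / 2 < 0 := hshape₁ ▸ half_sub_sqrt_div_neg one_pos (by norm_num)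
  have hneg₂ := half_sub_sqrt_div_neg h2a (lt_add_of_pos_left _ (pow_pos ha 2))
  have hmem₁ : (((1 - √2) / 2 : ℝ) : ℂ) ∈ spectrum ℂ Mbar := by
    rw [hMbar, mem_spectrum_blockDiagonal_two_iff]
    right
    have := congrArg ((↑) : ℝ → ℂ) hroot₁
    push_cast at this ⊢
    linear_combination this
  refine ⟨hmem₁, ?_, hneg₁, hneg₂, not_posSemidef_of_ofReal_mem_spectrum hmem₁ hneg₁⟩
  rw [hMbar, mem_spectrum_blockDiagonal_two_iff]
  left
  have := congrArg ((↑) : ℝ → ℂ) hroot₂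
  push_cast at this ⊢
  linear_combination this
end
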